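/- arXiv:0911.3827 — 6 statements merged into one kernel-verified Lean document; each statement's English description precedes it below -/
import Mathlib

section
/- If λ_{i,d} = i^{-β} for i = 1, …, d with 0 ≤ β < 3/4, then the strong ε-condition holds: d^{1/2} (∑_{i=1}^d λ_{i,d}²) / (∑_{i=1}^d λ_{i,d})² → 0 as d → ∞. -/
/-!
Since `β ≥ 0`, every term of `∑ i^{-β}` is at least `d^{-β}`, so the denominator is at least
`d^{2-2β}`. For the numerator fix any `s ∈ (1, 3/2)` with `2β ≤ s` (possible as `β < 3/4`):
then `i^{-2β} = i^{s-2β} i^{-s} ≤ d^{s-2β} i^{-s}` and `∑ i^{-s}` converges, so the numerator is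
`O(d^{s-2β})`. Hence the whole quotient is `O(d^{s-3/2})`.
-/

open Filter Finset

namespace Real

lemma natCast_rpow_one_sub_le_sum_Icc_rpow_neg {β : ℝ} (hβ : 0 ≤ β) {d : ℕ} (hd : 0 < d) :
    (d : ℝ) ^ (1 - β) ≤ ∑ i ∈ Icc 1 d, (i : ℝ) ^ (-β) := by
  have hd' : (0 : ℝ) < d := by exact_mod_cast hd
  calc (d : ℝ) ^ (1 - β) = #(Icc 1 d) • (d : ℝ) ^ (-β) := by
        rw [Nat.card_Icc, add_tsub_cancel_right, nsmul_eq_mul, sub_eq_add_neg, rpow_add hd',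
          rpow_one]
    _ ≤ ∑ i ∈ Icc 1 d, (i : ℝ) ^ (-β) := by
        refine card_nsmul_le_sum _ _ _ fun i hi => ?_
        obtain ⟨hi1, hid⟩ := mem_Icc.mp hi
        exact rpow_le_rpow_of_nonpos (by exact_mod_cast hi1) (by exact_mod_cast hid)
          (neg_nonpos.mpr hβ)

lemma sum_Icc_rpow_neg_le_natCast_rpow_mul_tsum {s t : ℝ} (hs : 1 < s) (hts : t ≤ s) (d : ℕ) :
    ∑ i ∈ Icc 1 d, (i : ℝ) ^ (-t) ≤ (d : ℝ) ^ (s - t) * ∑' n : ℕ, (n : ℝ) ^ (-s) := by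
  have hsum : Summable fun n : ℕ => (n : ℝ) ^ (-s) := summable_nat_rpow.mpr (by linarith)
  calc ∑ i ∈ Icc 1 d, (i : ℝ) ^ (-t) = ∑ i ∈ Icc 1 d, (i : ℝ) ^ (s - t) * (i : ℝ) ^ (-s) := by
        refine sum_congr rfl fun i hi => ?_
        have hi0 : (0 : ℝ) < i := by exact_mod_cast (mem_Icc.mp hi).1
        rw [← rpow_add hi0]
        ring_nf
    _ ≤ ∑ i ∈ Icc 1 d, (d : ℝ) ^ (s - t) * (i : ℝ) ^ (-s) := by
        refine sum_le_sum fun i hi => ?_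
        gcongr
        exact_mod_cast (mem_Icc.mp hi).2
    _ = (d : ℝ) ^ (s - t) * ∑ i ∈ Icc 1 d, (i : ℝ) ^ (-s) := (mul_sum _ _ _).symm
    _ ≤ (d : ℝ) ^ (s - t) * ∑' n : ℕ, (n : ℝ) ^ (-s) := by
        gcongr
        exact hsum.sum_le_tsum _ fun n _ => by positivity

lemma tendsto_natCast_rpow_atTop_nhds_zero {r : ℝ} (hr : r < 0) :
    Tendsto (fun d : ℕ => (d : ℝ) ^ r) atTop (nhds 0) := by
  simpa only [neg_neg, Function.comp_def] using
    (tendsto_rpow_neg_atTop (neg_pos.mpr hr)).comp tendsto_natCast_atTop_atTop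

lemma sqrt_mul_sum_rpow_neg_sq_div_sq_sum_le {β s : ℝ} (hβ : 0 ≤ β) (hs : 1 < s) (hβs : 2 * β ≤ s)
    {d : ℕ} (hd : 0 < d) :
    √d * (∑ i ∈ Icc 1 d, ((i : ℝ) ^ (-β)) ^ 2) / (∑ i ∈ Icc 1 d, (i : ℝ) ^ (-β)) ^ 2 ≤
      (∑' n : ℕ, (n : ℝ) ^ (-s)) * (d : ℝ) ^ (s - 3 / 2) := by
  have hd' : (0 : ℝ) < d := by exact_mod_cast hd
  set C := ∑' n : ℕ, (n : ℝ) ^ (-s)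
  have hsq : ∑ i ∈ Icc 1 d, ((i : ℝ) ^ (-β)) ^ 2 = ∑ i ∈ Icc 1 d, (i : ℝ) ^ (-(2 * β)) :=
    sum_congr rfl fun i _ => by
      rw [← rpow_mul_natCast (Nat.cast_nonneg i)]
      ring_nf
  have hnum := sum_Icc_rpow_neg_le_natCast_rpow_mul_tsum hs hβs d
  have hden := natCast_rpow_one_sub_le_sum_Icc_rpow_neg hβ hd
  calc √d * (∑ i ∈ Icc 1 d, ((i : ℝ) ^ (-β)) ^ 2) / (∑ i ∈ Icc 1 d, (i : ℝ) ^ (-β)) ^ 2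
      ≤ √d * ((d : ℝ) ^ (s - 2 * β) * C) / ((d : ℝ) ^ (1 - β)) ^ 2 := by
        rw [hsq]
        gcongr
    _ = C * ((d : ℝ) ^ (1 / 2 : ℝ) * (d : ℝ) ^ (s - 2 * β) / (d : ℝ) ^ ((1 - β) * 2)) := by
        rw [sqrt_eq_rpow, ← rpow_mul_natCast hd'.le, Nat.cast_ofNat]
        ring
    _ = C * (d : ℝ) ^ (s - 3 / 2) := by
        rw [← rpow_add hd', ← rpow_sub hd']
        ring_nf

end Real

/-- Polynomially decreasing eigenvalues `λ_{i,d} = i^{-β}` with `0 ≤ β < 3/4`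
satisfy the strong ε-condition: `√d * ∑ λ² / (∑ λ)² → 0` as `d → ∞`. -/
theorem strong_eps_condition_poly (β : ℝ) (hβ0 : 0 ≤ β) (hβ : β < 3 / 4) :
    Tendsto
      (fun d : ℕ =>
        Real.sqrt d * (∑ i ∈ Finset.Icc 1 d, ((i : ℝ) ^ (-β)) ^ 2) /
          (∑ i ∈ Finset.Icc 1 d, (i : ℝ) ^ (-β)) ^ 2)
      atTop (nhds 0) := by
  set s := max (2 * β) (5 / 4)
  have hs : 1 < s := lt_max_of_lt_right (by norm_num)
  have hs' : s < 3 / 2 := max_lt (by linarith) (by norm_num)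
  have hlim : Tendsto (fun d : ℕ => (∑' n : ℕ, (n : ℝ) ^ (-s)) * (d : ℝ) ^ (s - 3 / 2))
      atTop (nhds 0) := by
    simpa using (Real.tendsto_natCast_rpow_atTop_nhds_zero (sub_neg.mpr hs')).const_mul _
  refine squeeze_zero' (Eventually.of_forall fun d => by positivity) ?_ hlim
  filter_upwards [eventually_gt_atTop 0] with d hd
  exact Real.sqrt_mul_sum_rpow_neg_sq_div_sq_sum_le hβ0 hs (le_max_left _ _) hd
end

section
/- In the spiked model with λ_{1,d} = … = λ_{m,d} = C₁ d^α and λ_{m+1,d} = … = λ_{d,d} = C₂, where m = ⌊d^β⌋, 0 < β < 1, C₁, C₂ > 0, and 0 ≤ 2α + β < 3/2, the strong ε-condition holds: d^{1/2} ∑_{i=1}^d λ_{i,d}² / (∑_{i=1}^d λ_{i,d})² → 0 as d → ∞. -/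
open Filter Topology

/-! Once `d ^ β ≤ d / 2`, the `C₂`-block alone gives `∑ λ ≥ C₂ d / 2`, while
`∑ λ² ≤ d ^ β (C₁ d ^ α) ^ 2 + C₂² d`. Hence `√d ∑ λ² / (∑ λ)²` is at most a constant times `d ^ (2α + β - 3/2) + d ^ (-1/2)`, which tends to zero. -/

lemma sum_Icc_comp_ite_le (g : ℝ → ℝ) (A B : ℝ) {m d : ℕ} (hmd : m ≤ d) :
    ∑ i ∈ Finset.Icc 1 d, g (if i ≤ m then A else B) = m * g A + ((d : ℝ) - m) * g B := by
  simp only [apply_ite g, Finset.sum_ite]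
  have h_le : (Finset.Icc 1 d).filter (· ≤ m) = Finset.Icc 1 m := by
    ext i; simp only [Finset.mem_filter, Finset.mem_Icc]; omega
  have h_gt : (Finset.Icc 1 d).filter (¬ · ≤ m) = Finset.Icc (m + 1) d := by
    ext i; simp only [Finset.mem_filter, Finset.mem_Icc]; omega
  rw [h_le, h_gt]
  simp [Nat.cast_sub hmd, mul_comm]

lemma spiked_ratio_le {a b m M x : ℝ} (ha : 0 ≤ a) (hb : 0 < b) (hx : 0 < x)
    (hm : 0 ≤ m) (hmM : m ≤ M) (hmx : m ≤ x / 2) :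
    (m * a ^ 2 + (x - m) * b ^ 2) / (m * a + (x - m) * b) ^ 2 ≤
      4 * (M * a ^ 2 / (x ^ 2 * b ^ 2) + 1 / x) := by
  have h_den : x / 2 * b ≤ m * a + (x - m) * b := by nlinarith [mul_nonneg hm ha]
  have h_num : m * a ^ 2 + (x - m) * b ^ 2 ≤ M * a ^ 2 + x * b ^ 2 := by
    nlinarith [mul_le_mul_of_nonneg_right hmM (sq_nonneg a), mul_nonneg hm (sq_nonneg b)]
  calc (m * a ^ 2 + (x - m) * b ^ 2) / (m * a + (x - m) * b) ^ 2
      ≤ (M * a ^ 2 + x * b ^ 2) / (x / 2 * b) ^ 2 :=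
        div_le_div₀ (by nlinarith [sq_nonneg a, sq_nonneg b]) h_num (by positivity)
          (pow_le_pow_left₀ (by positivity) h_den 2)
    _ = 4 * (M * a ^ 2 / (x ^ 2 * b ^ 2) + 1 / x) := by field_simp; ring

lemma sqrt_mul_spike_bound_eq (α β C₁ C₂ : ℝ) {x : ℝ} (hx : 0 < x) :
    √x * (x ^ β * (C₁ * x ^ α) ^ 2 / (x ^ 2 * C₂ ^ 2) + 1 / x) =
      C₁ ^ 2 / C₂ ^ 2 * x ^ (2 * α + β - 3 / 2) + x ^ (-(1 / 2) : ℝ) := by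
  have h_spike : x ^ (2 * α + β - 3 / 2) = √x * x ^ β * (x ^ α) ^ 2 / x ^ 2 := by
    rw [Real.sqrt_eq_rpow, ← Real.rpow_natCast, ← Real.rpow_natCast, ← Real.rpow_mul hx.le,
      ← Real.rpow_add hx, ← Real.rpow_add hx, ← Real.rpow_sub hx]
    congr 1; push_cast; ring
  have h_bulk : x ^ (-(1 / 2) : ℝ) = √x / x := by
    rw [Real.sqrt_eq_rpow, show (-(1 / 2) : ℝ) = 1 / 2 - 1 by norm_num, Real.rpow_sub hx,
      Real.rpow_one]
  rw [h_spike, h_bulk]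
  field_simp

lemma tendsto_natCast_rpow_atTop_zero {s : ℝ} (hs : s < 0) :
    Tendsto (fun d : ℕ => (d : ℝ) ^ s) atTop (𝓝 0) := by
  simpa [Function.comp_def] using
    (tendsto_rpow_neg_atTop (neg_pos.2 hs)).comp tendsto_natCast_atTop_atTop

lemma eventually_rpow_le_half_self {β : ℝ} (hβ : β < 1) :
    ∀ᶠ x : ℝ in atTop, x ^ β ≤ x / 2 := by
  filter_upwards [(tendsto_rpow_atTop (sub_pos.2 hβ)).eventually_ge_atTop 2,
    eventually_gt_atTop 0] with x hx2 hx0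
  have h_split : x = x ^ β * x ^ (1 - β) := by
    rw [← Real.rpow_add hx0, add_sub_cancel, Real.rpow_one]
  nlinarith [Real.rpow_pos_of_pos hx0 β]

theorem strong_eps_condition_spiked_general (α β C₁ C₂ : ℝ)
    (hβ1 : β < 1)
    (hC₁ : 0 < C₁) (hC₂ : 0 < C₂)
    (hcond : 2 * α + β < 3 / 2)
    (lam : ℕ → ℕ → ℝ)
    (hlam : ∀ d : ℕ, ∀ i ∈ Finset.Icc 1 d,
      lam d i = if i ≤ ⌊(d : ℝ) ^ β⌋₊ then C₁ * (d : ℝ) ^ α else C₂) :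
    Tendsto
      (fun d : ℕ =>
        Real.sqrt d * (∑ i ∈ Finset.Icc 1 d, (lam d i) ^ 2) /
          (∑ i ∈ Finset.Icc 1 d, lam d i) ^ 2)
      atTop (nhds 0) := by
  have h_bound : Tendsto (fun d : ℕ => 4 * (C₁ ^ 2 / C₂ ^ 2 * (d : ℝ) ^ (2 * α + β - 3 / 2) +
      (d : ℝ) ^ (-(1 / 2) : ℝ))) atTop (𝓝 0) := by
    simpa using (((tendsto_natCast_rpow_atTop_zero (by linarith)).const_mul _).add
      (tendsto_natCast_rpow_atTop_zero (by norm_num))).const_mul 4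
  refine squeeze_zero' (Eventually.of_forall fun d => by positivity) ?_ h_bound
  filter_upwards [tendsto_natCast_atTop_atTop.eventually (eventually_rpow_le_half_self hβ1),
    eventually_gt_atTop 0] with d h_half hd
  have hd' : (0 : ℝ) < d := Nat.cast_pos.2 hd
  set m := ⌊(d : ℝ) ^ β⌋₊
  have hmβ : (m : ℝ) ≤ (d : ℝ) ^ β := Nat.floor_le (by positivity)
  have hmd : m ≤ d := Nat.cast_le.1 (hmβ.trans (h_half.trans (by linarith)) : (m : ℝ) ≤ d)
  have h_sum (g : ℝ → ℝ) :
      ∑ i ∈ Finset.Icc 1 d, g (lam d i) = m * g (C₁ * (d : ℝ) ^ α) + ((d : ℝ) - m) * g C₂ := by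
    rw [Finset.sum_congr rfl fun i hi => by rw [hlam d i hi]]
    exact sum_Icc_comp_ite_le g _ _ hmd
  rw [h_sum (· ^ 2), show ∑ i ∈ Finset.Icc 1 d, lam d i = _ from h_sum id, mul_div_assoc,
    ← sqrt_mul_spike_bound_eq α β C₁ C₂ hd', mul_left_comm]
  exact mul_le_mul_of_nonneg_left (spiked_ratio_le (by positivity) hC₂ hd' (Nat.cast_nonneg m)
    hmβ (hmβ.trans h_half)) (Real.sqrt_nonneg _)

/-- Spiked model with an increasing number of spikes: the first `m = ⌊d^β⌋`
eigenvalues equal `C₁ d^α` and the remaining `d - m` equal `C₂`.  If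
`0 ≤ 2α + β < 3/2` then the strong ε-condition holds:
`√d * ∑ λ² / (∑ λ)² → 0` as `d → ∞`. -/
theorem strong_eps_condition_spiked (α β C₁ C₂ : ℝ)
    (hα : 0 ≤ α) (hβ0 : 0 < β) (hβ1 : β < 1)
    (hC₁ : 0 < C₁) (hC₂ : 0 < C₂)
    (hcond : 2 * α + β < 3 / 2)
    (lam : ℕ → ℕ → ℝ)
    (hlam : ∀ d : ℕ, ∀ i ∈ Finset.Icc 1 d,
      lam d i = if i ≤ ⌊(d : ℝ) ^ β⌋₊ then C₁ * (d : ℝ) ^ α else C₂) :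
    Tendsto
      (fun d : ℕ =>
        Real.sqrt d * (∑ i ∈ Finset.Icc 1 d, (lam d i) ^ 2) /
          (∑ i ∈ Finset.Icc 1 d, lam d i) ^ 2)
      atTop (nhds 0) :=
  strong_eps_condition_spiked_general α β C₁ C₂ hβ1 hC₁ hC₂ hcond lam hlam
end

section
/- Weyl's lower bound: if A and B are m×m real symmetric matrices, then φ_j(A) + φ_{k-j+m}(B) ≤ φ_k(A+B) for all indices with k ≤ j and k - j + m ≤ m, where φ_i denotes the i-th largest eigenvalue. -/
/-!
Index eigenvalues increasingly, `λ₀ ≤ ⋯ ≤ λₙ₋₁`. When `i + j ≤ k`, the span of the eigenvectors of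
`A` with index `≥ i`, that of `B` with index `≥ j` and that of `A + B` with index `≤ k` have
dimensions `n - i`, `n - j` and `k + 1`, which add up to more than `2n`, so they share a nonzero
vector `x`. Expanding `⟪T x, x⟫` in each eigenbasis gives `λᵢ(A)‖x‖² ≤ ⟪A x, x⟫`,
`λⱼ(B)‖x‖² ≤ ⟪B x, x⟫` and `⟪(A + B) x, x⟫ ≤ λₖ(A + B)‖x‖²`, and adding the first two yields
`λᵢ(A) + λⱼ(B) ≤ λₖ(A + B)`. Weyl's lower bound is this inequality read in decreasing order.
-/

/-- The `i`-th largest eigenvalue (0-indexed: `i = 0` gives the largest)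
of a real symmetric matrix, counted with multiplicity. -/
noncomputable def ithLargestEig {m : ℕ} {A : Matrix (Fin m) (Fin m) ℝ}
    (hA : A.IsHermitian) (i : Fin m) : ℝ :=
  (hA.eigenvalues ∘ Tuple.sort hA.eigenvalues) i.rev

open Module Submodule

theorem Submodule.inf_inf_ne_bot_of_two_mul_finrank_lt {K V : Type*} [DivisionRing K]
    [AddCommGroup V] [Module K V] [FiniteDimensional K V] {U₁ U₂ U₃ : Submodule K V}
    (h : 2 * finrank K V < finrank K U₁ + finrank K U₂ + finrank K U₃) : U₁ ⊓ U₂ ⊓ U₃ ≠ ⊥ := by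
  intro hbot
  have h₁₂ := finrank_sup_add_finrank_inf_eq U₁ U₂
  have h₁₂₃ : finrank K ↥(U₁ ⊓ U₂) + finrank K U₃ ≤ finrank K V :=
    finrank_add_finrank_le_of_disjoint (disjoint_iff.mpr hbot)
  have := (U₁ ⊔ U₂).finrank_le
  omega

section Eigenbasis

variable {E : Type*} [NormedAddCommGroup E] [InnerProductSpace ℝ E]

namespace OrthonormalBasis

variable {ι : Type*} [Fintype ι] (b : OrthonormalBasis ι ℝ E)

theorem finrank_span_image_finset (s : Finset ι) :
    finrank ℝ (span ℝ (b '' s)) = s.card := by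
  rw [Set.image_eq_range, finrank_span_eq_card (b := fun i : (s : Set ι) => b i)
    (b.orthonormal.linearIndependent.comp _ Subtype.val_injective)]
  simp

theorem repr_eq_zero_of_mem_span_image {s : Set ι} {x : E} (hx : x ∈ span ℝ (b '' s))
    {i : ι} (hi : i ∉ s) : b.repr x i = 0 := by
  rw [← b.coe_toBasis] at hx
  rw [← b.coe_toBasis_repr_apply, ← Finsupp.notMem_support_iff]
  exact fun h => hi (b.toBasis.repr_support_subset_of_mem_span s hx h)

variable {b} {T : E →ₗ[ℝ] E} {μ : ι → ℝ}

theorem repr_apply_of_apply_eq_smul (hb : ∀ i, T (b i) = μ i • b i) (x : E) (i : ι) :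
    b.repr (T x) i = μ i * b.repr x i := by
  classical
  conv_lhs => rw [← b.sum_repr x]
  simp only [map_sum, map_smul, hb, smul_smul, b.repr_self]
  simp [Pi.single_apply, mul_comm]

theorem inner_apply_self_eq_sum (hb : ∀ i, T (b i) = μ i • b i) (x : E) :
    inner ℝ (T x) x = ∑ i, μ i * b.repr x i ^ 2 := by
  rw [← b.repr.inner_map_map, PiLp.inner_apply]
  refine Finset.sum_congr rfl fun i _ => ?_
  rw [repr_apply_of_apply_eq_smul hb]
  simp only [RCLike.inner_apply, Real.ringHom_apply]
  ring

theorem norm_sq_eq_sum (x : E) : ‖x‖ ^ 2 = ∑ i, b.repr x i ^ 2 := by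
  rw [← b.repr.norm_map, EuclideanSpace.norm_sq_eq]
  simp

theorem mul_norm_sq_le_inner_apply_self (hb : ∀ i, T (b i) = μ i • b i) {s : Set ι} {c : ℝ}
    (hc : ∀ i ∈ s, c ≤ μ i) {x : E} (hx : x ∈ span ℝ (b '' s)) :
    c * ‖x‖ ^ 2 ≤ inner ℝ (T x) x := by
  rw [inner_apply_self_eq_sum hb, b.norm_sq_eq_sum, Finset.mul_sum]
  refine Finset.sum_le_sum fun i _ => ?_
  by_cases hi : i ∈ s
  · exact mul_le_mul_of_nonneg_right (hc i hi) (sq_nonneg _)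
  · simp [b.repr_eq_zero_of_mem_span_image hx hi]

theorem inner_apply_self_le_mul_norm_sq (hb : ∀ i, T (b i) = μ i • b i) {s : Set ι} {c : ℝ}
    (hc : ∀ i ∈ s, μ i ≤ c) {x : E} (hx : x ∈ span ℝ (b '' s)) :
    inner ℝ (T x) x ≤ c * ‖x‖ ^ 2 := by
  have hneg : ∀ i, (-T) (b i) = (-μ i) • b i := by simp [hb, neg_smul]
  have := mul_norm_sq_le_inner_apply_self hneg (c := -c) (fun i hi => neg_le_neg (hc i hi)) hx
  simp only [LinearMap.neg_apply, inner_neg_left] at this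
  linarith

end OrthonormalBasis

theorem weyl_eigenvalue_add_le {n : ℕ} {T₁ T₂ : E →ₗ[ℝ] E} {b₁ b₂ b₃ : OrthonormalBasis (Fin n) ℝ E}
    {μ₁ μ₂ μ₃ : Fin n → ℝ} (h₁ : ∀ i, T₁ (b₁ i) = μ₁ i • b₁ i) (h₂ : ∀ i, T₂ (b₂ i) = μ₂ i • b₂ i)
    (h₃ : ∀ i, (T₁ + T₂) (b₃ i) = μ₃ i • b₃ i) (hμ₁ : Monotone μ₁) (hμ₂ : Monotone μ₂)
    (hμ₃ : Monotone μ₃) {i j k : Fin n} (hijk : i.val + j.val ≤ k.val) :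
    μ₁ i + μ₂ j ≤ μ₃ k := by
  have : FiniteDimensional ℝ E := b₁.toBasis.finiteDimensional_of_finite
  obtain ⟨x, ⟨⟨hx₁, hx₂⟩, hx₃⟩, hx⟩ : ∃ x ∈ span ℝ (b₁ '' ↑(Finset.Ici i)) ⊓
      span ℝ (b₂ '' ↑(Finset.Ici j)) ⊓ span ℝ (b₃ '' ↑(Finset.Iic k)), x ≠ 0 := by
    refine exists_mem_ne_zero_of_ne_bot (inf_inf_ne_bot_of_two_mul_finrank_lt ?_)
    simp only [OrthonormalBasis.finrank_span_image_finset, finrank_eq_card_basis b₁.toBasis,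
      Fin.card_Ici, Fin.card_Iic, Fintype.card_fin]
    omega
  have hT₁ := b₁.mul_norm_sq_le_inner_apply_self h₁ (fun l hl => hμ₁ (Finset.mem_Ici.mp hl)) hx₁
  have hT₂ := b₂.mul_norm_sq_le_inner_apply_self h₂ (fun l hl => hμ₂ (Finset.mem_Ici.mp hl)) hx₂
  have hT₃ := b₃.inner_apply_self_le_mul_norm_sq h₃ (fun l hl => hμ₃ (Finset.mem_Iic.mp hl)) hx₃
  rw [LinearMap.add_apply, inner_add_left] at hT₃
  have : 0 < ‖x‖ ^ 2 := by positivity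
  nlinarith

end Eigenbasis

section ithLargestEig

variable {m : ℕ} {A B : Matrix (Fin m) (Fin m) ℝ}

theorem ithLargestEig_rev (hA : A.IsHermitian) (i : Fin m) :
    ithLargestEig hA i.rev = hA.eigenvalues (Tuple.sort hA.eigenvalues i) := by
  simp [ithLargestEig]

theorem monotone_ithLargestEig_rev (hA : A.IsHermitian) :
    Monotone fun i : Fin m => ithLargestEig hA i.rev := by
  intro a b hab
  simp only [ithLargestEig_rev]
  exact Tuple.monotone_sort hA.eigenvalues hab

theorem exists_orthonormalBasis_toEuclideanLin_eq_ithLargestEig_rev_smul (hA : A.IsHermitian) :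
    ∃ b : OrthonormalBasis (Fin m) ℝ (EuclideanSpace ℝ (Fin m)),
      ∀ i, Matrix.toEuclideanLin A (b i) = ithLargestEig hA i.rev • b i := by
  refine ⟨hA.eigenvectorBasis.reindex (Tuple.sort hA.eigenvalues).symm, fun i => ?_⟩
  rw [OrthonormalBasis.reindex_apply, Equiv.symm_symm, ithLargestEig_rev]
  exact congrArg (WithLp.toLp 2) (hA.mulVec_eigenvectorBasis _)

theorem ithLargestEig_rev_add_le (hA : A.IsHermitian) (hB : B.IsHermitian) {i j k : Fin m}
    (hijk : i.val + j.val ≤ k.val) :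
    ithLargestEig hA i.rev + ithLargestEig hB j.rev ≤ ithLargestEig (hA.add hB) k.rev := by
  obtain ⟨bA, hbA⟩ := exists_orthonormalBasis_toEuclideanLin_eq_ithLargestEig_rev_smul hA
  obtain ⟨bB, hbB⟩ := exists_orthonormalBasis_toEuclideanLin_eq_ithLargestEig_rev_smul hB
  obtain ⟨bC, hbC⟩ := exists_orthonormalBasis_toEuclideanLin_eq_ithLargestEig_rev_smul (hA.add hB)
  rw [map_add] at hbC
  exact weyl_eigenvalue_add_le hbA hbB hbC (monotone_ithLargestEig_rev hA)
    (monotone_ithLargestEig_rev hB) (monotone_ithLargestEig_rev _) hijk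

end ithLargestEig

/-- Weyl's inequality (lower bound): for real symmetric `m × m` matrices
`A`, `B` and indices `k ≤ j` (0-indexed),
`φ_j(A) + φ_{m-1-(j-k)}(B) ≤ φ_k(A + B)`. -/
theorem weyl_lower (m : ℕ) (A B : Matrix (Fin m) (Fin m) ℝ)
    (hA : A.IsHermitian) (hB : B.IsHermitian)
    (k j : Fin m) (hkj : k ≤ j) :
    ithLargestEig hA j +
        ithLargestEig hB
          ⟨m - 1 - (j.val - k.val), by have := j.isLt; omega⟩ ≤
      ithLargestEig (hA.add hB) k := by
  have h := ithLargestEig_rev_add_le hA hB (i := j.rev) (j := ⟨j.val - k.val, by omega⟩)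
    (k := k.rev) (by simp only [Fin.val_rev]; omega)
  simp only [Fin.rev_rev] at h
  convert h using 3
  ext
  simp only [Fin.val_rev]
  omega
end

section
/- Suppose ρ : ℕ → [0,1] satisfies ρ(i) → 0 as i → ∞, and for each d the nonnegative weights λ̃_{1,d}, …, λ̃_{d,d} satisfy ∑_{i=1}^d λ̃_{i,d} = 1 and ∑_{i=1}^d λ̃_{i,d}² → 0 as d → ∞. Then for any family of permutations π*_d of {1,…,d}, ∑_{i=1}^d λ̃_{π*_d(i),d} ρ(i) → 0 as d → ∞. -/
/-!
A Toeplitz-type argument. Each weight is at most `√(∑ λ̃²)`, so the weights are uniformly small.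
Given `ε`, choose `N` with `|ρ i| ≤ ε` for `i ≥ N`: the first `N` terms contribute at most
`max λ̃ · ∑_{i<N} |ρ i| → 0`, and the remaining ones at most `ε · ∑ λ̃ = ε`. The permutation only
relabels the weights, which changes neither their sum nor their maximum.
-/

open Filter Finset Topology

lemma eventually_forall_le_of_tendsto_sum_sq {α : Type*} {ι : α → Type*} [∀ a, Fintype (ι a)]
    {l : Filter α} {w : ∀ a, ι a → ℝ} (h : Tendsto (fun a => ∑ i, w a i ^ 2) l (𝓝 0))
    {δ : ℝ} (hδ : 0 < δ) : ∀ᶠ a in l, ∀ i, w a i ≤ δ := by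
  filter_upwards [h.eventually (gt_mem_nhds (pow_pos hδ 2))] with a ha i
  have hi : w a i ^ 2 < δ ^ 2 :=
    (single_le_sum (f := fun i => w a i ^ 2) (fun _ _ => sq_nonneg _) (mem_univ i)).trans_lt ha
  exact (le_abs_self _).trans (abs_lt_of_sq_lt_sq hi hδ.le).le

lemma sum_fin_ite_lt_le_sum_range {d N : ℕ} {f : ℕ → ℝ} (hf : ∀ i, 0 ≤ f i) :
    ∑ i : Fin d, (if (i : ℕ) < N then f i else 0) ≤ ∑ i ∈ range N, f i := by
  rw [Fin.sum_univ_eq_sum_range (fun i => if i < N then f i else 0), ← sum_filter]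
  refine sum_le_sum_of_subset_of_nonneg (fun i hi => ?_) fun i _ _ => hf i
  exact mem_range.2 (mem_filter.1 hi).2

lemma abs_sum_mul_le {d N : ℕ} {w : Fin d → ℝ} (hw : ∀ i, 0 ≤ w i) (hw1 : ∑ i, w i ≤ 1)
    {δ : ℝ} (hδ : 0 ≤ δ) (hwδ : ∀ i, w i ≤ δ) {x : ℕ → ℝ} {η : ℝ}
    (hxη : ∀ i, N ≤ i → |x i| ≤ η) :
    |∑ i, w i * x i| ≤ δ * ∑ i ∈ range N, |x i| + η := by
  have hη : 0 ≤ η := (abs_nonneg _).trans (hxη N le_rfl)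
  have hsplit : ∀ i : Fin d,
      w i * |x i| ≤ δ * (if (i : ℕ) < N then |x i| else 0) + η * w i := by
    intro i
    split_ifs with h
    · nlinarith [mul_le_mul_of_nonneg_right (hwδ i) (abs_nonneg (x i)), mul_nonneg hη (hw i)]
    · nlinarith [mul_le_mul_of_nonneg_left (hxη i (not_lt.1 h)) (hw i)]
  calc |∑ i, w i * x i| ≤ ∑ i, |w i * x i| := abs_sum_le_sum_abs _ _
    _ = ∑ i, w i * |x i| := by simp only [abs_mul, abs_of_nonneg (hw _)]
    _ ≤ ∑ i : Fin d, (δ * (if (i : ℕ) < N then |x i| else 0) + η * w i) :=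
        sum_le_sum fun i _ => hsplit i
    _ = δ * ∑ i : Fin d, (if (i : ℕ) < N then |x i| else 0) + η * ∑ i, w i := by
        rw [sum_add_distrib, mul_sum, mul_sum]
    _ ≤ δ * ∑ i ∈ range N, |x i| + η * 1 := by
        gcongr
        exact sum_fin_ite_lt_le_sum_range fun i => abs_nonneg (x i)
    _ = δ * ∑ i ∈ range N, |x i| + η := by rw [mul_one]

theorem tendsto_sum_fin_mul_of_tendsto_zero {x : ℕ → ℝ} (hx : Tendsto x atTop (𝓝 0))
    {w : (d : ℕ) → Fin d → ℝ} (hw : ∀ d i, 0 ≤ w d i) (hw1 : ∀ d, ∑ i, w d i ≤ 1)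
    (hsmall : ∀ δ > 0, ∀ᶠ d in atTop, ∀ i, w d i ≤ δ) :
    Tendsto (fun d => ∑ i : Fin d, w d i * x i) atTop (𝓝 0) := by
  rw [Metric.tendsto_nhds]
  intro ε hε
  obtain ⟨N, hN⟩ := eventually_atTop.1 ((tendsto_zero_iff_abs_tendsto_zero x).1 hx
    |>.eventually (ge_mem_nhds (by positivity : (0 : ℝ) < ε / 3)))
  set C := ∑ i ∈ range N, |x i|
  have hC : 0 ≤ C := sum_nonneg fun i _ => abs_nonneg (x i)
  have hδ : 0 < ε / (3 * (C + 1)) := by positivity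
  have hδC : ε / (3 * (C + 1)) * C ≤ ε / 3 := by
    rw [div_mul_eq_mul_div, div_le_div_iff₀ (by positivity) (by positivity)]
    nlinarith
  filter_upwards [hsmall _ hδ] with d hd
  rw [Real.dist_0_eq_abs]
  linarith [abs_sum_mul_le (hw d) (hw1 d) hδ.le hd hN]

theorem weighted_mixing_sum_tendsto_zero_general
    (ρ : ℕ → ℝ)
    (hρ : Tendsto ρ atTop (nhds 0))
    (lam : (d : ℕ) → Fin d → ℝ)
    (hnn : ∀ d i, 0 ≤ lam d i)
    (hsum : ∀ d : ℕ, 0 < d → ∑ i, lam d i = 1)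
    (hsq : Tendsto (fun d : ℕ => ∑ i, (lam d i) ^ 2) atTop (nhds 0))
    (π : (d : ℕ) → Equiv.Perm (Fin d)) :
    Tendsto (fun d : ℕ => ∑ i : Fin d, lam d (π d i) * ρ i.val)
      atTop (nhds 0) := by
  have hsum_le : ∀ d, ∑ i, lam d (π d i) ≤ 1 := by
    intro d
    rw [Equiv.sum_comp (π d) (lam d)]
    rcases Nat.eq_zero_or_pos d with rfl | hd
    · simp
    · exact (hsum d hd).le
  refine tendsto_sum_fin_mul_of_tendsto_zero hρ (fun d i => hnn d _) hsum_le fun δ hδ => ?_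
  filter_upwards [eventually_forall_le_of_tendsto_sum_sq hsq hδ] with d hd i
  exact hd _

/-- Lemma 2: if `ρ : ℕ → [0,1]` tends to 0 and for each `d` the nonnegative
weights `λ̃_{i,d}` sum to 1 with `∑ λ̃² → 0`, then for any family of
permutations `π*_d` of `{1,…,d}`, `∑_i λ̃_{π*_d(i),d} ρ(i) → 0`. -/
theorem weighted_mixing_sum_tendsto_zero
    (ρ : ℕ → ℝ) (hρmem : ∀ i, ρ i ∈ Set.Icc (0 : ℝ) 1)
    (hρ : Tendsto ρ atTop (nhds 0))
    (lam : (d : ℕ) → Fin d → ℝ)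
    (hnn : ∀ d i, 0 ≤ lam d i)
    (hsum : ∀ d : ℕ, 0 < d → ∑ i, lam d i = 1)
    (hsq : Tendsto (fun d : ℕ => ∑ i, (lam d i) ^ 2) atTop (nhds 0))
    (π : (d : ℕ) → Equiv.Perm (Fin d)) :
    Tendsto (fun d : ℕ => ∑ i : Fin d, lam d (π d i) * ρ i.val)
      atTop (nhds 0) :=
  weighted_mixing_sum_tendsto_zero_general ρ hρ lam hnn hsum hsq π
end

section
/- Let P be a d×d orthogonal matrix and C = diag(c_1,…,c_d) with distinct positive entries c_1 > c_2 > … > c_d. If the upper-left k×k block relation holds in the sense that ‖Pᵀ C P − C‖_F is small, then for each m ≠ 1, (c_1 − c_m)² P_{m1}² ≤ ‖Pᵀ C P − C‖_F²; in particular, if P_n is a sequence of orthogonal matrices with ‖P_nᵀ C P_n − C‖_F → 0, then (P_n)_{ii}² → 1 for all i. -/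
/-!
Since `Pᵀ P = 1`, we have `Pᵀ C P - C = Pᵀ (C P - P C)`, and multiplying by the orthogonal
matrix `Pᵀ` does not change the Frobenius norm. The `(m, j)` entry of the commutator `C P - P C`
is `(c_m - c_j) P_{mj}`, so `(c_m - c_j)² P_{mj}²` is one of the terms of `‖Pᵀ C P - C‖_F²`.
For a sequence `P_n` with `‖P_nᵀ C P_n - C‖_F → 0`, the distinctness of the `c_i` then forces every
off-diagonal entry to `0`, and since each column of `P_n` is a unit vector, `(P_n)_{ii}² → 1`.
-/

open Matrix Filter

/-- Squared Frobenius norm of a real square matrix. -/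
noncomputable def frobSq {d : ℕ} (M : Matrix (Fin d) (Fin d) ℝ) : ℝ :=
  ∑ i : Fin d, ∑ j : Fin d, (M i j) ^ 2

open Topology

section FrobeniusBounds

variable {d : ℕ}

lemma frobSq_nonneg (M : Matrix (Fin d) (Fin d) ℝ) : 0 ≤ frobSq M :=
  Finset.sum_nonneg fun _ _ => Finset.sum_nonneg fun _ _ => sq_nonneg _

lemma sq_apply_le_frobSq (M : Matrix (Fin d) (Fin d) ℝ) (i j : Fin d) :
    M i j ^ 2 ≤ frobSq M :=
  calc M i j ^ 2 ≤ ∑ l, M i l ^ 2 :=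
        Finset.single_le_sum (fun l _ => sq_nonneg (M i l)) (Finset.mem_univ j)
    _ ≤ frobSq M :=
        Finset.single_le_sum (f := fun k => ∑ l, M k l ^ 2)
          (fun _ _ => Finset.sum_nonneg fun _ _ => sq_nonneg _) (Finset.mem_univ i)

lemma frobSq_eq_trace (M : Matrix (Fin d) (Fin d) ℝ) : frobSq M = trace (Mᵀ * M) := by
  simp only [frobSq, trace, diag, mul_apply, transpose_apply, sq]
  exact Finset.sum_comm

lemma frobSq_transpose_mul_of_orthogonal {P : Matrix (Fin d) (Fin d) ℝ} (hP : Pᵀ * P = 1)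
    (M : Matrix (Fin d) (Fin d) ℝ) : frobSq (Pᵀ * M) = frobSq M := by
  rw [frobSq_eq_trace, frobSq_eq_trace, transpose_mul, transpose_transpose, Matrix.mul_assoc,
    ← Matrix.mul_assoc P, mul_eq_one_comm.mpr hP, Matrix.one_mul]

end FrobeniusBounds

lemma conj_diagonal_sub_diagonal_eq {ι : Type*} [Fintype ι] [DecidableEq ι]
    {P : Matrix ι ι ℝ} (hP : Pᵀ * P = 1) (c : ι → ℝ) :
    Pᵀ * diagonal c * P - diagonal c = Pᵀ * (diagonal c * P - P * diagonal c) := by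
  rw [Matrix.mul_sub, ← Matrix.mul_assoc, ← Matrix.mul_assoc, hP, Matrix.one_mul,
    Matrix.mul_assoc]

lemma diagonal_mul_sub_mul_diagonal_apply {ι : Type*} [Fintype ι] [DecidableEq ι]
    (c : ι → ℝ) (P : Matrix ι ι ℝ) (i j : ι) :
    (diagonal c * P - P * diagonal c) i j = (c i - c j) * P i j := by
  rw [Matrix.sub_apply, diagonal_mul, mul_diagonal, sub_mul, mul_comm (P i j)]

lemma sum_sq_apply_eq_one_of_transpose_mul_self {ι : Type*} [Fintype ι] [DecidableEq ι]
    {P : Matrix ι ι ℝ} (hP : Pᵀ * P = 1) (j : ι) : ∑ i, P i j ^ 2 = 1 := by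
  simpa [mul_apply, sq] using congrFun (congrFun hP j) j

theorem sq_sub_mul_sq_apply_le_frobSq {d : ℕ} {P : Matrix (Fin d) (Fin d) ℝ}
    (hP : Pᵀ * P = 1) (c : Fin d → ℝ) (i j : Fin d) :
    (c i - c j) ^ 2 * P i j ^ 2 ≤ frobSq (Pᵀ * diagonal c * P - diagonal c) := by
  rw [conj_diagonal_sub_diagonal_eq hP, frobSq_transpose_mul_of_orthogonal hP, ← mul_pow,
    ← diagonal_mul_sub_mul_diagonal_apply]
  exact sq_apply_le_frobSq _ i j

section Sequences

variable {α : Type*} {l : Filter α} {d : ℕ} {c : Fin d → ℝ} {P : α → Matrix (Fin d) (Fin d) ℝ}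

theorem tendsto_sq_apply_zero_of_tendsto_frobSq (hP : ∀ n, (P n)ᵀ * P n = 1)
    (hlim : Tendsto (fun n => frobSq ((P n)ᵀ * diagonal c * P n - diagonal c)) l (𝓝 0))
    {i j : Fin d} (hc : c i ≠ c j) : Tendsto (fun n => P n i j ^ 2) l (𝓝 0) := by
  have hgap : 0 < (c i - c j) ^ 2 := sq_pos_of_ne_zero (sub_ne_zero.mpr hc)
  refine squeeze_zero (fun n => sq_nonneg _)
    (fun n => (le_div_iff₀' hgap).mpr (sq_sub_mul_sq_apply_le_frobSq (hP n) c i j)) ?_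
  simpa using hlim.div_const ((c i - c j) ^ 2)

theorem tendsto_sq_apply_self_one_of_tendsto_frobSq (hP : ∀ n, (P n)ᵀ * P n = 1)
    (hlim : Tendsto (fun n => frobSq ((P n)ᵀ * diagonal c * P n - diagonal c)) l (𝓝 0))
    (hc : Function.Injective c) (j : Fin d) : Tendsto (fun n => P n j j ^ 2) l (𝓝 1) := by
  have hcol : ∀ n, P n j j ^ 2 = 1 - ∑ i ∈ Finset.univ.erase j, P n i j ^ 2 := fun n => by
    rw [← sum_sq_apply_eq_one_of_transpose_mul_self (hP n) j,
      ← Finset.add_sum_erase _ _ (Finset.mem_univ j), add_sub_cancel_right]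
  have hoff : Tendsto (fun n => ∑ i ∈ Finset.univ.erase j, P n i j ^ 2) l (𝓝 0) := by
    simpa using tendsto_finsetSum (Finset.univ.erase j) fun i hi =>
      tendsto_sq_apply_zero_of_tendsto_frobSq hP hlim (hc.ne (Finset.ne_of_mem_erase hi))
  simpa only [sub_zero, ← hcol] using tendsto_const_nhds (x := (1 : ℝ)).sub hoff

end Sequences

theorem orthogonal_near_diag_general (d : ℕ) (hd : 0 < d)
    (c : Fin d → ℝ)
    (hstrict : ∀ i j : Fin d, i < j → c j < c i) :
    (∀ P : Matrix (Fin d) (Fin d) ℝ, P.transpose * P = 1 →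
      ∀ m : Fin d, m ≠ ⟨0, hd⟩ →
        (c ⟨0, hd⟩ - c m) ^ 2 * (P m ⟨0, hd⟩) ^ 2 ≤
          frobSq (P.transpose * Matrix.diagonal c * P - Matrix.diagonal c)) ∧
    (∀ Pseq : ℕ → Matrix (Fin d) (Fin d) ℝ,
      (∀ n, (Pseq n).transpose * Pseq n = 1) →
      Tendsto (fun n => Real.sqrt
          (frobSq ((Pseq n).transpose * Matrix.diagonal c * Pseq n -
            Matrix.diagonal c)))
        atTop (nhds 0) →
      ∀ i : Fin d,
        Tendsto (fun n => (Pseq n i i) ^ 2) atTop (nhds 1)) := by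
  refine ⟨fun P hP m _ => ?_, fun P hP hlim i => ?_⟩
  · rw [sub_sq_comm]
    exact sq_sub_mul_sq_apply_le_frobSq hP c m ⟨0, hd⟩
  · have hlimSq := hlim.pow 2
    rw [zero_pow two_ne_zero] at hlimSq
    simp only [Real.sq_sqrt (frobSq_nonneg _)] at hlimSq
    exact tendsto_sq_apply_self_one_of_tendsto_frobSq hP hlimSq
      (show StrictAnti c from hstrict).injective i

/-- Let `C = diag(c)` with distinct positive entries `c_0 > c_1 > … > c_{d-1}`.
For any orthogonal `P` and `m ≠ 0`, `(c_0 - c_m)² P_{m0}² ≤ ‖Pᵀ C P - C‖_F²`;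
consequently, for a sequence of orthogonal matrices `P_n` with
`‖P_nᵀ C P_n - C‖_F → 0`, the squared diagonal entries `(P_n)_{ii}²` tend
to 1 for every `i`. -/
theorem orthogonal_near_diag (d : ℕ) (hd : 0 < d)
    (c : Fin d → ℝ) (hpos : ∀ i, 0 < c i)
    (hstrict : ∀ i j : Fin d, i < j → c j < c i) :
    (∀ P : Matrix (Fin d) (Fin d) ℝ, P.transpose * P = 1 →
      ∀ m : Fin d, m ≠ ⟨0, hd⟩ →
        (c ⟨0, hd⟩ - c m) ^ 2 * (P m ⟨0, hd⟩) ^ 2 ≤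
          frobSq (P.transpose * Matrix.diagonal c * P - Matrix.diagonal c)) ∧
    (∀ Pseq : ℕ → Matrix (Fin d) (Fin d) ℝ,
      (∀ n, (Pseq n).transpose * Pseq n = 1) →
      Tendsto (fun n => Real.sqrt
          (frobSq ((Pseq n).transpose * Matrix.diagonal c * Pseq n -
            Matrix.diagonal c)))
        atTop (nhds 0) →
      ∀ i : Fin d,
        Tendsto (fun n => (Pseq n i i) ^ 2) atTop (nhds 1)) :=
  orthogonal_near_diag_general d hd c hstrict
end

section
/- If P is a d×d orthogonal matrix and C = diag(c_1,…,c_d) with c_i > 0, then ‖Pᵀ C P − C‖_F² ≥ ∑_{j=1}^d (c_1 − c_j)² P_{j1}². -/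
/-!
Since `Pᵀ P = 1`, the `j`-th column of `Pᵀ C P - C` equals `Pᵀ v` with `v_k = (c_k - c_j) P_{kj}`:
subtracting `c_j Pᵀ P = c_j I` from `Pᵀ C P` kills the diagonal entry of `C` in that column.
As `Pᵀ` is an isometry, this column has squared length `∑_k (c_j - c_k)² P_{kj}²`, and a single
column is bounded by the whole squared Frobenius norm.
-/

open Matrix

variable {n : Type*} [Fintype n]

theorem dotProduct_mulVec_self_of_transpose_mul_eq_one [DecidableEq n] {R : Type*} [CommSemiring R]
    {A : Matrix n n R} (hA : Aᵀ * A = 1) (v : n → R) :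
    (A *ᵥ v) ⬝ᵥ (A *ᵥ v) = v ⬝ᵥ v := by
  rw [dotProduct_mulVec, ← vecMul_transpose, vecMul_vecMul, hA, vecMul_one]

theorem sum_sq_apply_le_sum_sum_sq {m : Type*} [Fintype m] (M : Matrix m n ℝ) (j : n) :
    ∑ i, M i j ^ 2 ≤ ∑ i, ∑ k, M i k ^ 2 :=
  Finset.sum_le_sum fun i _ =>
    Finset.single_le_sum (fun k _ => sq_nonneg (M i k)) (Finset.mem_univ j)

theorem transpose_mul_diagonal_mul_sub_diagonal_apply [DecidableEq n] {R : Type*} [CommRing R]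
    {P : Matrix n n R} (hP : Pᵀ * P = 1) (c : n → R) (i j : n) :
    (Pᵀ * diagonal c * P - diagonal c) i j = (Pᵀ *ᵥ fun k => (c k - c j) * P k j) i := by
  have hPij : ∑ k, P k i * P k j = if i = j then 1 else 0 := by
    simpa only [mul_apply, transpose_apply, one_apply] using congrFun (congrFun hP i) j
  have hdiag : diagonal c i j = c j * if i = j then 1 else 0 := by
    rw [diagonal_apply, mul_ite, mul_one, mul_zero]; split_ifs with h <;> simp [h]
  rw [Matrix.sub_apply, mul_apply, hdiag, ← hPij, Finset.mul_sum, ← Finset.sum_sub_distrib]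
  simp only [mul_diagonal, transpose_apply, mulVec, dotProduct]
  exact Finset.sum_congr rfl fun k _ => by ring

theorem sum_sq_sub_mul_sq_le_sum_sq_transpose_mul_diagonal_mul_sub [DecidableEq n]
    {P : Matrix n n ℝ} (hP : Pᵀ * P = 1) (c : n → ℝ) (j : n) :
    ∑ k, (c j - c k) ^ 2 * P k j ^ 2 ≤
      ∑ i, ∑ k, ((Pᵀ * diagonal c * P - diagonal c) i k) ^ 2 := by
  set v : n → ℝ := fun k => (c k - c j) * P k j
  have hPt : Pᵀᵀ * Pᵀ = 1 := by rw [transpose_transpose]; exact mul_eq_one_comm.mp hP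
  calc ∑ k, (c j - c k) ^ 2 * P k j ^ 2 = v ⬝ᵥ v := by
        simp only [v, dotProduct]; congr 1 with k; ring
    _ = (Pᵀ *ᵥ v) ⬝ᵥ (Pᵀ *ᵥ v) := (dotProduct_mulVec_self_of_transpose_mul_eq_one hPt v).symm
    _ = ∑ i, (Pᵀ * diagonal c * P - diagonal c) i j ^ 2 := by
        simp only [dotProduct, transpose_mul_diagonal_mul_sub_diagonal_apply hP, sq]; rfl
    _ ≤ _ := sum_sq_apply_le_sum_sum_sq _ j

theorem frobenius_lower_bound_general (d : ℕ) (hd : 0 < d)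
    (P : Matrix (Fin d) (Fin d) ℝ) (hP : P.transpose * P = 1)
    (c : Fin d → ℝ) :
    ∑ j : Fin d,
      (c ⟨0, hd⟩ - c j) ^ 2 * (P j ⟨0, hd⟩) ^ 2 ≤
      ∑ i : Fin d, ∑ j : Fin d,
        ((P.transpose * Matrix.diagonal c * P - Matrix.diagonal c) i j) ^ 2 :=
  sum_sq_sub_mul_sq_le_sum_sq_transpose_mul_diagonal_mul_sub hP c ⟨0, hd⟩

/-- If `P` is orthogonal and `C = diag(c)` with positive entries, then the
squared Frobenius norm of `Pᵀ C P - C` dominates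
`∑_j (c_0 - c_j)² P_{j0}²` (indices 0-based; `0` plays the role of the
first column). -/
theorem frobenius_lower_bound (d : ℕ) (hd : 0 < d)
    (P : Matrix (Fin d) (Fin d) ℝ) (hP : P.transpose * P = 1)
    (c : Fin d → ℝ) (hc : ∀ i, 0 < c i) :
    ∑ j : Fin d,
      (c ⟨0, hd⟩ - c j) ^ 2 * (P j ⟨0, hd⟩) ^ 2 ≤
      ∑ i : Fin d, ∑ j : Fin d,
        ((P.transpose * Matrix.diagonal c * P - Matrix.diagonal c) i j) ^ 2 :=
  frobenius_lower_bound_general d hd P hP c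
end
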